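/- For the group G_{1,r} = ⟨x, y | x^{-r} y^{-1} x y x^r = y^{-2} x^r y x y^{-1} x^{-r} y^2⟩, the natural map F_2 → G_{1,r} induces an isomorphism G_{1,r}/γ_4(G_{1,r}) ≅ F_2/γ_4(F_2), i.e., the relator word lies in γ_4(F_2). -/

import Mathlib

/- The relator is `p⁻¹ ⁅x, w⁆ p` with `p = y xʳ` and `w = (y xʳ y⁻¹)(y⁻¹ xʳ y)`, and
`w ≡ x²ʳ` modulo `γ₃` because the two conjugates of `xʳ` differ from it by mutually inverse
elements of `γ₂/γ₃`. Since `x` commutes with `x²ʳ`, the commutator `⁅x, w⁆` equals a commutator of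
`x` with an element of `γ₃`, so it lies in `γ₄`. Consequently `F₂ → G_{1,r}` is a surjection whose
kernel lies in `γ₄(F₂)`, and such a surjection induces an isomorphism modulo `γ₄`. -/

namespace Stmt11

abbrev F := FreeGroup (Fin 2)

def x : F := FreeGroup.of 0
def y : F := FreeGroup.of 1

/-- The relator of `G_{1,r}`. -/
def R (r : ℕ) : F :=
  (x ^ r)⁻¹ * y⁻¹ * x * y * x ^ r *
    (y⁻¹ * y⁻¹ * x ^ r * y * x * y⁻¹ * (x ^ r)⁻¹ * y * y)⁻¹

abbrev G1 (r : ℕ) := PresentedGroup ({R r} : Set F)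

/-- The composite `F₂ → G_{1,r} → G_{1,r}/γ₄(G_{1,r})`. -/
def f (r : ℕ) : F →* (G1 r ⧸ Subgroup.lowerCentralSeries (⊤ : Subgroup (G1 r)) 3) :=
  (QuotientGroup.mk' (Subgroup.lowerCentralSeries (⊤ : Subgroup (G1 r)) 3)).comp (PresentedGroup.mk _)

end Stmt11

open scoped commutatorElement

namespace Subgroup

variable {G H : Type*} [Group G] [Group H]

theorem commutatorElement_mem_lowerCentralSeries_succ {n : ℕ} {g : G}
    (hg : g ∈ lowerCentralSeries ⊤ n) (h : G) : ⁅g, h⁆ ∈ lowerCentralSeries ⊤ (n + 1) :=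
  commutator_mem_commutator hg (mem_top h)

theorem commutatorElement_mem_lowerCentralSeries_succ' {n : ℕ} {g : G}
    (hg : g ∈ lowerCentralSeries ⊤ n) (h : G) : ⁅h, g⁆ ∈ lowerCentralSeries ⊤ (n + 1) := by
  rw [← commutatorElement_inv]
  exact inv_mem (commutatorElement_mem_lowerCentralSeries_succ hg h)

theorem conj_mul_conj_mul_inv_sq_mem_lowerCentralSeries_two (a y : G) :
    y * a * y⁻¹ * (y⁻¹ * a * y) * (a ^ 2)⁻¹ ∈ lowerCentralSeries ⊤ 2 := by
  have hc : ⁅y, a⁆ ∈ lowerCentralSeries ⊤ 1 :=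
    commutatorElement_mem_lowerCentralSeries_succ (mem_top y) a
  have hd : ⁅y⁻¹, a⁆⁻¹ ∈ lowerCentralSeries ⊤ 1 :=
    inv_mem (commutatorElement_mem_lowerCentralSeries_succ (mem_top y⁻¹) a)
  have key : y * a * y⁻¹ * (y⁻¹ * a * y) * (a ^ 2)⁻¹ = ⁅⁅y, a⁆, y⁻¹⁆ * ⁅⁅y⁻¹, a⁆⁻¹, a⁆ := by
    simp only [commutatorElement_def]; group
  rw [key]
  exact mul_mem (commutatorElement_mem_lowerCentralSeries_succ hc _)
    (commutatorElement_mem_lowerCentralSeries_succ hd _)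

theorem commutatorElement_mem_lowerCentralSeries_three_of_commute {x a : G} (hxa : Commute x a)
    (y : G) : ⁅x, y * a * y⁻¹ * (y⁻¹ * a * y)⁆ ∈ lowerCentralSeries ⊤ 3 := by
  set g := y * a * y⁻¹ * (y⁻¹ * a * y) * (a ^ 2)⁻¹
  have hw : y * a * y⁻¹ * (y⁻¹ * a * y) = g * a ^ 2 := by simp only [g, inv_mul_cancel_right]
  have hx : ⁅x, g * a ^ 2⁆ = ⁅x, g⁆ := calc
    ⁅x, g * a ^ 2⁆ = x * g * (a ^ 2 * x⁻¹ * (a ^ 2)⁻¹) * g⁻¹ := by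
      simp only [commutatorElement_def]; group
    _ = ⁅x, g⁆ := by
      rw [← (hxa.pow_right 2).inv_left.eq, mul_inv_cancel_right, commutatorElement_def]
  rw [hw, hx]
  exact commutatorElement_mem_lowerCentralSeries_succ'
    (conj_mul_conj_mul_inv_sq_mem_lowerCentralSeries_two a y) x

theorem relator_mem_lowerCentralSeries_three {x a : G} (hxa : Commute x a) (y : G) :
    a⁻¹ * y⁻¹ * x * y * a * (y⁻¹ * y⁻¹ * a * y * x * y⁻¹ * a⁻¹ * y * y)⁻¹ ∈
      lowerCentralSeries ⊤ 3 := by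
  have key : a⁻¹ * y⁻¹ * x * y * a * (y⁻¹ * y⁻¹ * a * y * x * y⁻¹ * a⁻¹ * y * y)⁻¹ =
      (y * a)⁻¹ * ⁅x, y * a * y⁻¹ * (y⁻¹ * a * y)⁆ * (y * a) := by
    simp only [commutatorElement_def]; group
  rw [key]
  exact (lowerCentralSeries_normal ⊤ 3).conj_mem' _
    (commutatorElement_mem_lowerCentralSeries_three_of_commute hxa y) _

theorem exists_quotient_lowerCentralSeries_mulEquiv_of_surjective {φ : G →* H}
    (hφ : Function.Surjective φ) {n : ℕ} (hker : φ.ker ≤ lowerCentralSeries ⊤ n) :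
    ∃ e : (G ⧸ lowerCentralSeries (⊤ : Subgroup G) n) ≃*
      (H ⧸ lowerCentralSeries (⊤ : Subgroup H) n),
      ∀ w : G, e (w : G ⧸ lowerCentralSeries (⊤ : Subgroup G) n) = (φ w : H ⧸ _) := by
  set ψ := (QuotientGroup.mk' (lowerCentralSeries (⊤ : Subgroup H) n)).comp φ
  have hψ : Function.Surjective ψ := (QuotientGroup.mk'_surjective _).comp hφ
  have hmap : (lowerCentralSeries ⊤ n).map φ = lowerCentralSeries ⊤ n := by
    rw [map_lowerCentralSeries, map_top_of_surjective φ hφ]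
  have hψker : lowerCentralSeries ⊤ n = ψ.ker := by
    rw [← MonoidHom.comap_ker, QuotientGroup.ker_mk', ← hmap, comap_map_eq, sup_of_le_left hker]
  exact ⟨(QuotientGroup.quotientMulEquivOfEq hψker).trans
    (QuotientGroup.quotientKerEquivOfSurjective ψ hψ), fun _ => rfl⟩

end Subgroup

namespace Stmt11

theorem relator_in_gamma4_general (r : ℕ) :
    R r ∈ Subgroup.lowerCentralSeries (⊤ : Subgroup F) 3 ∧
    ∃ e : (F ⧸ Subgroup.lowerCentralSeries (⊤ : Subgroup F) 3) ≃* (G1 r ⧸ Subgroup.lowerCentralSeries (⊤ : Subgroup (G1 r)) 3),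
      ∀ w : F, e (QuotientGroup.mk' (Subgroup.lowerCentralSeries (⊤ : Subgroup F) 3) w) = f r w := by
  have hR : R r ∈ Subgroup.lowerCentralSeries (⊤ : Subgroup F) 3 :=
    Subgroup.relator_mem_lowerCentralSeries_three (Commute.self_pow x r) y
  have hker : (PresentedGroup.mk ({R r} : Set F)).ker ≤ Subgroup.lowerCentralSeries ⊤ 3 :=
    fun _ hw => Subgroup.normalClosure_le_normal (Set.singleton_subset_iff.mpr hR)
      (PresentedGroup.mk_eq_one_iff.mp hw)
  exact ⟨hR, Subgroup.exists_quotient_lowerCentralSeries_mulEquiv_of_surjective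
    (PresentedGroup.mk_surjective _) hker⟩

theorem relator_in_gamma4 (r : ℕ) (hr : 0 < r) :
    R r ∈ Subgroup.lowerCentralSeries (⊤ : Subgroup F) 3 ∧
    ∃ e : (F ⧸ Subgroup.lowerCentralSeries (⊤ : Subgroup F) 3) ≃* (G1 r ⧸ Subgroup.lowerCentralSeries (⊤ : Subgroup (G1 r)) 3),
      ∀ w : F, e (QuotientGroup.mk' (Subgroup.lowerCentralSeries (⊤ : Subgroup F) 3) w) = f r w :=
  relator_in_gamma4_general r

end Stmt11
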